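/- Let m ≥ 1 be an integer. For every n ≥ 1 and every tuple (a_1, …, a_n) ∈ (Fin m)^n, the operator product P_{a_1}·C_G · P_{a_2}·C_G ⋯ P_{a_n}·C_G equals ((−1)^n / m^{(2n−1)/2}) · [∏_{j=1}^{n−1} (m·δ_{a_j,a_{j+1}} − 2)] · (√m·|a_1⟩⟨a_n| − 2·|a_1⟩⟨s|), where δ_{a,b} = 1 if a = b and 0 otherwise (the empty product for n = 1 is 1). -/

import Mathlib

noncomputable section

open scoped BigOperators

/-- The complex Euclidean space `ℂ^m`. -/
abbrev H (m : ℕ) := EuclideanSpace ℂ (Fin m)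

/-- The computational orthonormal basis vector `|a⟩`. -/
def ket {m : ℕ} (a : Fin m) : H m := EuclideanSpace.single a 1

/-- The uniform superposition `|s⟩ = (1/√m) Σ_a |a⟩`. -/
def ketS (m : ℕ) : H m := ((Real.sqrt m : ℂ))⁻¹ • ∑ a : Fin m, ket a

/-- The outer product `|x⟩⟨y|`, i.e. `v ↦ ⟪y, v⟫ • x`. -/
def outer {m : ℕ} (x y : H m) : H m →L[ℂ] H m := (innerSL ℂ y).smulRight x

/-- The projection `P_a = |a⟩⟨a|`. -/
def P {m : ℕ} (a : Fin m) : H m →L[ℂ] H m := outer (ket a) (ket a)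

/-- The Grover coin `C_G = 2|s⟩⟨s| - 1`. -/
def groverC (m : ℕ) : H m →L[ℂ] H m := (2 : ℂ) • outer (ketS m) (ketS m) - 1

/-- `Ξ₀(a_1, …, a_n) = ∏_{j=1}^{n-1} (m δ_{a_j, a_{j+1}} - 2)` (empty product is 1). -/
def Xi0 (m n : ℕ) (a : Fin n → Fin m) : ℂ :=
  ∏ j : Fin n, if h : (j : ℕ) + 1 < n then
    ((m : ℂ) * (if a j = a ⟨(j : ℕ) + 1, h⟩ then 1 else 0) - 2) else 1

/-!
Each factor is rank one: `P_a C_G = -(1/√m) |a⟩⟨w_a|` with `w_c = √m |c⟩ - 2 |s⟩`. A product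
of rank-one operators `|x_1⟩⟨y_1| ⋯ |x_n⟩⟨y_n|` collapses to `(∏_j ⟨y_j|x_{j+1}⟩) |x_1⟩⟨y_n|`,
and here `⟨w_a|b⟩ = (m δ_{a,b} - 2)/√m`, which produces `Ξ₀` and the remaining powers of `√m`.
-/

variable {m : ℕ}

lemma outer_mul_outer (x y u v : H m) :
    outer x y * outer u v = inner ℂ y u • outer x v := by
  ext w
  simp only [outer, mul_apply_eq_comp, ContinuousLinearMap.smulRight_apply,
    innerSL_apply_apply, _root_.smul_apply, inner_smul_right, PiLp.smul_apply,
    smul_eq_mul]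
  ring

lemma list_prod_ofFn_smul_outer {n : ℕ} (c : Fin (n + 1) → ℂ) (x y : Fin (n + 1) → H m) :
    (List.ofFn fun j => c j • outer (x j) (y j)).prod
      = ((∏ j, c j) * ∏ j : Fin n, inner ℂ (y j.castSucc) (x j.succ)) •
          outer (x 0) (y (Fin.last n)) := by
  induction n with
  | zero => simp
  | succ n ih =>
    rw [List.ofFn_succ, List.prod_cons,
      ih (fun j => c j.succ) (fun j => x j.succ) (fun j => y j.succ), smul_mul_smul_comm,
      outer_mul_outer, smul_smul, Fin.prod_univ_succ c,
      Fin.prod_univ_succ fun j : Fin (n + 1) => inner ℂ (y j.castSucc) (x j.succ)]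
    congr 1
    simp only [Fin.castSucc_zero, Fin.succ_zero_eq_one, Fin.succ_castSucc]
    ring

lemma inner_ket_ket (a b : Fin m) :
    inner ℂ (ket a) (ket b) = if a = b then (1 : ℂ) else 0 := by
  simp [ket, EuclideanSpace.inner_single_left]

lemma inner_ket_ketS (a : Fin m) : inner ℂ (ket a) (ketS m) = ((Real.sqrt m : ℂ))⁻¹ := by
  simp [ketS, inner_ket_ket]

lemma inner_ketS_ket (a : Fin m) : inner ℂ (ketS m) (ket a) = ((Real.sqrt m : ℂ))⁻¹ := by
  rw [← inner_conj_symm, inner_ket_ketS, map_inv₀, Complex.conj_ofReal]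

lemma ofReal_sqrt_ne_zero (a : Fin m) : (Real.sqrt m : ℂ) ≠ 0 :=
  Complex.ofReal_ne_zero.2 (Real.sqrt_pos.2 (Nat.cast_pos.2 a.pos)).ne'

def groverVec (m : ℕ) (c : Fin m) : H m := (Real.sqrt m : ℂ) • ket c - (2 : ℂ) • ketS m

lemma outer_groverVec (x : H m) (c : Fin m) :
    outer x (groverVec m c)
      = (Real.sqrt m : ℂ) • outer x (ket c) - (2 : ℂ) • outer x (ketS m) := by
  ext v i
  simp only [outer, groverVec, _root_.sub_apply, _root_.smul_apply,
    ContinuousLinearMap.smulRight_apply, innerSL_apply_apply, inner_sub_left, inner_smul_left,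
    Complex.conj_ofReal, map_ofNat, PiLp.sub_apply, PiLp.smul_apply, smul_eq_mul]
  ring

lemma P_mul_groverC (a : Fin m) :
    P a * groverC m = (-((Real.sqrt m : ℂ))⁻¹) • outer (ket a) (groverVec m a) := by
  rw [P, groverC, mul_sub, mul_one, mul_smul_comm, outer_mul_outer, inner_ket_ketS, smul_smul,
    outer_groverVec, smul_sub, smul_smul, smul_smul, neg_mul,
    inv_mul_cancel₀ (ofReal_sqrt_ne_zero a)]
  module

lemma inner_groverVec_ket (a b : Fin m) :
    inner ℂ (groverVec m a) (ket b)
      = ((m : ℂ) * (if a = b then 1 else 0) - 2) / (Real.sqrt m : ℂ) := by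
  have := ofReal_sqrt_ne_zero a
  have hsq : (Real.sqrt m : ℂ) ^ 2 = m := by exact_mod_cast Real.sq_sqrt (Nat.cast_nonneg m)
  rw [groverVec, inner_sub_left, inner_smul_left, inner_smul_left, inner_ket_ket, inner_ketS_ket,
    Complex.conj_ofReal, map_ofNat, ← hsq]
  split_ifs <;> field_simp

lemma Xi0_succ {n : ℕ} (a : Fin (n + 1) → Fin m) :
    Xi0 m (n + 1) a
      = ∏ j : Fin n, ((m : ℂ) * (if a j.castSucc = a j.succ then 1 else 0) - 2) := by
  rw [Xi0, Fin.prod_univ_castSucc, Fin.val_last, dif_neg (lt_irrefl _), mul_one]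
  refine Finset.prod_congr rfl fun j _ => ?_
  rw [dif_pos (by simp)]
  rfl

theorem grover_proj_prod (m : ℕ) (n : ℕ) (hn : 1 ≤ n) (a : Fin n → Fin m) :
    (List.ofFn (fun j : Fin n => P (a j) * groverC m)).prod
      = (((-1 : ℂ) ^ n / ((Real.sqrt m : ℂ)) ^ (2 * n - 1)) * Xi0 m n a) •
          (((Real.sqrt m : ℂ)) • outer (ket (a ⟨0, by omega⟩)) (ket (a ⟨n - 1, by omega⟩))
            - (2 : ℂ) • outer (ket (a ⟨0, by omega⟩)) (ketS m)) := by
  obtain ⟨k, rfl⟩ := Nat.exists_eq_add_of_le' hn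
  simp_rw [P_mul_groverC]
  rw [list_prod_ofFn_smul_outer, outer_groverVec]
  simp only [inner_groverVec_ket, Finset.prod_const, Finset.card_univ, Fintype.card_fin,
    Finset.prod_div_distrib, Xi0_succ]
  congr 1
  rw [show 2 * (k + 1) - 1 = 2 * k + 1 by omega]
  ring
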